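/- Let F1, F2 : ℂ → ℂ be functions such that F1² and F2² are linearly independent over ℂ and there exists n with F1(n)·F2(n) ≠ 0. Let λ1, λ2, λ3 : ℤ → ℂˣ, μ1, μ2, μ3 : ℤ → ℂˣ, x, y : ℤ × ℤ → ℂˣ, and set ρ(l,m) = λ3(l)^((−1)^m), σ(l,m) = μ3(m)^((−1)^l). Define L(l,m,n) = [[F1(n)·λ1·x̄/x, F2(n)·ρ/y], [F2(n)·ȳ/ρ, F1(n)·λ2]] and M(l,m,n) = [[F1(n)·μ1·x̂/x, F2(n)/(σ·y)], [F2(n)·σ·ŷ, F1(n)·μ2]]. Then the compatibility condition L(l,m+1,n)·M(l,m,n) = M(l+1,m,n)·L(l,m,n) holds for all (l,m,n) if and only if (x,y) satisfies the LMKdV₂ system for all (l,m): (LMKdV2-a) (λ1/σ)·(x̂̄/x̂) + (μ2/ρ)·(y/ŷ) = λ2·σ·(y/ȳ) + ρ·μ1·(x̂̄/x̄) and (LMKdV2-b) ρ·μ1·x̂·ŷ̄ + λ2·σ·x·ŷ = (μ2/ρ)·x·ȳ + (λ1/σ)·x̄·ŷ̄. -/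

import Mathlib

/-- `ρ(l,m) = λ3(l)^((−1)^m)`. -/
noncomputable def rho (lam3 : ℤ → ℂˣ) (l m : ℤ) : ℂˣ :=
  lam3 l ^ ((((-1 : ℤˣ) ^ m) : ℤˣ) : ℤ)

/-- `σ(l,m) = μ3(m)^((−1)^l)`. -/
noncomputable def sig (μ3 : ℤ → ℂˣ) (l m : ℤ) : ℂˣ :=
  μ3 m ^ ((((-1 : ℤˣ) ^ l) : ℤˣ) : ℤ)


lemma rho_succ (lam3 : ℤ → ℂˣ) (l m : ℤ) :
    ((rho lam3 l (m+1) : ℂˣ) : ℂ) = ((rho lam3 l m : ℂˣ) : ℂ)⁻¹ := by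
  simp [rho, zpow_add, zpow_neg]

lemma sig_succ (μ3 : ℤ → ℂˣ) (l m : ℤ) :
    ((sig μ3 (l+1) m : ℂˣ) : ℂ) = ((sig μ3 l m : ℂˣ) : ℂ)⁻¹ := by
  simp [sig, zpow_add, zpow_neg]

set_option maxHeartbeats 2000000 in
/-- the Lax pair (LMKdV2LP) is compatible iff `(x, y)` solves the
LMKdV₂ system. -/
theorem stmt9 (F1 F2 : ℂ → ℂ)
    (hind : ∀ c1 c2 : ℂ, (∀ n : ℂ, c1 * (F1 n) ^ 2 + c2 * (F2 n) ^ 2 = 0) → c1 = 0 ∧ c2 = 0)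
    (hne : ∃ n : ℂ, F1 n * F2 n ≠ 0)
    (lam1 lam2 lam3 : ℤ → ℂˣ) (μ1 μ2 μ3 : ℤ → ℂˣ) (x y : ℤ × ℤ → ℂˣ)
    (L M : ℤ × ℤ → ℂ → Matrix (Fin 2) (Fin 2) ℂ)
    (hL : ∀ (l m : ℤ) (n : ℂ), L (l, m) n =
      !![F1 n * ((lam1 l : ℂ) * x (l + 1, m) / x (l, m)),
         F2 n * ((rho lam3 l m : ℂ) / y (l, m));
         F2 n * ((y (l + 1, m) : ℂ) / rho lam3 l m), F1 n * (lam2 l : ℂ)])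
    (hM : ∀ (l m : ℤ) (n : ℂ), M (l, m) n =
      !![F1 n * ((μ1 m : ℂ) * x (l, m + 1) / x (l, m)),
         F2 n / ((sig μ3 l m : ℂ) * y (l, m));
         F2 n * ((sig μ3 l m : ℂ) * y (l, m + 1)), F1 n * (μ2 m : ℂ)]) :
    (∀ (l m : ℤ) (n : ℂ), L (l, m + 1) n * M (l, m) n = M (l + 1, m) n * L (l, m) n) ↔
    (∀ l m : ℤ,
      (lam1 l : ℂ) / (sig μ3 l m) * (x (l + 1, m + 1) / x (l, m + 1)) +
          (μ2 m : ℂ) / (rho lam3 l m) * (y (l, m) / y (l, m + 1)) =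
        (lam2 l : ℂ) * sig μ3 l m * (y (l, m) / y (l + 1, m)) +
          (rho lam3 l m : ℂ) * μ1 m * (x (l + 1, m + 1) / x (l + 1, m)) ∧
      (rho lam3 l m : ℂ) * μ1 m * x (l, m + 1) * y (l + 1, m + 1) +
          (lam2 l : ℂ) * sig μ3 l m * x (l, m) * y (l, m + 1) =
        (μ2 m : ℂ) / (rho lam3 l m) * x (l, m) * y (l + 1, m) +
          (lam1 l : ℂ) / (sig μ3 l m) * x (l + 1, m) * y (l + 1, m + 1)) := by
  
  constructor
  · intro h l m
    obtain ⟨n, hn⟩ := hne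
    have hF1 : F1 n ≠ 0 := left_ne_zero_of_mul hn
    have hF2 : F2 n ≠ 0 := right_ne_zero_of_mul hn
    have H := h l m n
    rw [hL, hM, hL, hM] at H
    have H01 := congrFun (congrFun H 0) 1
    have H10 := congrFun (congrFun H 1) 0
    simp only [Matrix.mul_apply, Fin.sum_univ_two, Matrix.cons_val', Matrix.cons_val_zero,
      Matrix.cons_val_one, Matrix.head_cons, Matrix.head_fin_const, Matrix.empty_val',
      Matrix.cons_val_fin_one, Matrix.of_apply, rho_succ, sig_succ] at H01 H10
    constructor
    · field_simp at H01 ⊢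
      refine mul_left_cancel₀ (mul_ne_zero (mul_ne_zero hF1 hF2) (y (l, m)).ne_zero) ?_
      linear_combination (F1 n * F2 n * (y (l, m) : ℂ)) * H01
    · field_simp at H10 ⊢
      refine mul_left_cancel₀ (mul_ne_zero (mul_ne_zero hF1 hF2) (x (l, m)).ne_zero) ?_
      linear_combination (F1 n * F2 n * (x (l, m) : ℂ)) * H10
  · intro h l m n
    obtain ⟨ha, hb⟩ := h l m
    rw [hL, hM, hL, hM]
    ext i j
    fin_cases i <;> fin_cases j <;>
      simp only [Matrix.mul_apply, Fin.sum_univ_two, Matrix.cons_val', Matrix.cons_val_zero,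
        Matrix.cons_val_one, Matrix.head_cons, Matrix.head_fin_const, Matrix.empty_val',
        Matrix.cons_val_fin_one, Matrix.of_apply, Fin.zero_eta, Fin.mk_one, rho_succ, sig_succ]
    · field_simp
    · field_simp at ha ⊢
      linear_combination (F1 n * F2 n) * ha
    · field_simp at hb ⊢
      linear_combination (F1 n * F2 n) * hb
    · field_simp
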